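/- For a 2π-periodic real-analytic function f on ℝ, the trapezoidal rule T^(n)(f) = (2π/n)∑_{i=0}^{n−1} f(2πi/n) converges to ∫₀^{2π} f(φ)dφ exponentially fast: there exist C > 0 and q ∈ (0,1) with |T^(n)(f) − ∫₀^{2π} f dφ| ≤ C q^n for all n ≥ 1. -/

import Mathlib

/-!
Shifting the contour of the Fourier integral to `Im z = ∓b` (for any `b < a`, the sign opposite
to that of `k`) bounds the `k`-th Fourier coefficient of `f` by `M e^{-b|k|}`; the shift is legal
because the integrand is holomorphic on the strip and, by the identity theorem, `2π`-periodic
there. The trapezoidal rule with `n` nodes integrates `e^{ikx}` exactly unless `k` is a nonzero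
multiple of `n`, in which case it returns `2π` instead of `0`. Hence the error is
`2π ∑_{m ≠ 0} f̂(mn) = O(e^{-bn})`.
-/

open Real intervalIntegral

open Complex Filter Topology

def strip (a : ℝ) : Set ℂ := {z : ℂ | |z.im| < a}

namespace strip

variable {a : ℝ}

@[simp]
theorem mem_iff {z : ℂ} : z ∈ strip a ↔ |z.im| < a := Iff.rfl

theorem isOpen : IsOpen (strip a) :=
  isOpen_lt (continuous_abs.comp continuous_im) continuous_const

theorem convex : Convex ℝ (strip a) := by
  have : strip a = {z : ℂ | -a < z.im} ∩ {z : ℂ | z.im < a} := by ext; simp [abs_lt]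
  rw [this]
  exact (convex_halfSpace_im_gt _).inter (convex_halfSpace_im_lt _)

theorem ofReal_mem (ha : 0 < a) (x : ℝ) : (x : ℂ) ∈ strip a := by simpa using ha

theorem add_ofReal_mem {z : ℂ} (hz : z ∈ strip a) (x : ℝ) : z + x ∈ strip a := by simpa using hz

theorem add_mul_I_mem {c : ℝ} (hc : |c| < a) (x : ℝ) : x + c * I ∈ strip a := by simpa using hc

end strip

theorem periodic_on_strip_of_periodic_ofReal {F : ℂ → ℂ} {a T : ℝ} (ha : 0 < a)
    (hF : DifferentiableOn ℂ F (strip a)) (hper : ∀ x : ℝ, F (x + T) = F x) :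
    ∀ z ∈ strip a, F (z + T) = F z := by
  have hFan : AnalyticOnNhd ℂ F (strip a) := hF.analyticOnNhd strip.isOpen
  have hshift : AnalyticOnNhd ℂ (fun z => F (z + T)) (strip a) := fun z hz =>
    (hFan _ (strip.add_ofReal_mem hz T)).comp (f := (· + (T : ℂ))) (by fun_prop)
  have hreal : Tendsto ((↑) : ℝ → ℂ) (𝓝[≠] 0) (𝓝[≠] 0) :=
    continuous_ofReal.continuousWithinAt.tendsto_nhdsWithin fun x hx => by simpa using hx
  have hfreq : ∃ᶠ z in 𝓝[≠] (0 : ℂ), F (z + T) = F z :=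
    hreal.frequently (Frequently.of_forall hper)
  exact hshift.eqOn_of_preconnected_of_frequently_eq hFan strip.convex.isPreconnected
    (strip.ofReal_mem ha 0) hfreq

theorem integral_add_mul_I_eq_of_periodic {G : ℂ → ℂ} {a T c : ℝ}
    (hG : DifferentiableOn ℂ G (strip a)) (hper : ∀ z ∈ strip a, G (z + T) = G z)
    (hc : |c| < a) :
    ∫ x in (0 : ℝ)..T, G (x + c * I) = ∫ x in (0 : ℝ)..T, G x := by
  have hside : ∀ y ∈ Set.uIcc 0 c, |y| < a := fun y hy => by
    simpa using (Set.abs_sub_left_of_mem_uIcc hy).trans_lt (by simpa using hc)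
  have hrect : Set.uIcc (0 : ℂ).re (T + c * I).re ×ℂ Set.uIcc (0 : ℂ).im (T + c * I).im ⊆
      strip a := by
    intro z hz
    have hy := (mem_reProdIm.mp hz).2
    simp only [zero_im, add_im, ofReal_im, mul_im, ofReal_re, I_im, I_re, mul_zero,
      mul_one, zero_add, add_zero] at hy
    exact hside _ hy
  have hvert : ∫ y in (0 : ℝ)..c, G (T + y * I) = ∫ y in (0 : ℝ)..c, G (y * I) :=
    integral_congr fun y hy => by
      simpa [add_comm] using hper _ (strip.add_mul_I_mem (hside y hy) 0)
  have key := integral_boundary_rect_eq_zero_of_differentiableOn G 0 (T + c * I) (hG.mono hrect)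
  simp only [zero_re, zero_im, add_re, add_im, ofReal_re, ofReal_im, mul_re, mul_im, I_re, I_im,
    mul_zero, mul_one, sub_zero, zero_add, add_zero, ofReal_zero, zero_mul] at key
  rw [hvert] at key
  linear_combination -key

theorem exists_abs_lt_mul_eq_neg_natAbs {a b : ℝ} (hb : 0 ≤ b) (hba : b < a) (k : ℤ) :
    ∃ c : ℝ, |c| < a ∧ k * c = -(b * k.natAbs) := by
  rw [Nat.cast_natAbs, Int.cast_abs]
  rcases le_or_gt 0 k with hk | hk
  · refine ⟨-b, by rwa [abs_neg, abs_of_nonneg hb], ?_⟩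
    rw [abs_of_nonneg (Int.cast_nonneg hk)]; ring
  · refine ⟨b, by rwa [abs_of_nonneg hb], ?_⟩
    rw [abs_of_neg (Int.cast_lt_zero.mpr hk)]; ring

theorem summable_pow_natAbs {r : ℝ} (h0 : 0 ≤ r) (h1 : r < 1) :
    Summable fun m : ℤ => r ^ m.natAbs :=
  .of_nat_of_neg (by simpa using summable_geometric_of_lt_one h0 h1)
    (by simpa using summable_geometric_of_lt_one h0 h1)

theorem hasSum_ite_pow_natAbs {r : ℝ} (h0 : 0 ≤ r) (h1 : r < 1) :
    HasSum (fun m : ℤ => if m = 0 then 0 else r ^ m.natAbs) (2 * r / (1 - r)) := by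
  have hpos : HasSum (fun m : ℕ => r ^ (m + 1)) (r / (1 - r)) := by
    simpa [pow_succ', div_eq_mul_inv] using (hasSum_geometric_of_lt_one h0 h1).mul_left r
  have := HasSum.of_add_one_of_neg_add_one (f := fun m : ℤ => if m = 0 then 0 else r ^ m.natAbs)
    (hpos.congr_fun fun m => by rw [if_neg (by omega)]; congr 1)
    (hpos.congr_fun fun m => by rw [if_neg (by omega)]; congr 1)
  convert this using 1
  simp only [if_pos]
  ring

section Fourier

variable {T : ℝ} [hT : Fact (0 < T)]

theorem fourierCoeff_eq_integral_exp {F : ℂ → ℂ} {g : AddCircle T → ℂ}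
    (hg : ∀ x : ℝ, g x = F x) (k : ℤ) :
    fourierCoeff g k = (1 / T) • ∫ x in (0 : ℝ)..T, exp (-(2 * π * k * x * I / T)) * F x := by
  rw [fourierCoeff_eq_intervalIntegral g k 0, zero_add]
  congr 1
  refine integral_congr fun x _ => ?_
  rw [smul_eq_mul, fourier_coe_apply, hg]
  push_cast
  ring_nf

theorem norm_fourierCoeff_le_of_strip {F : ℂ → ℂ} {a b M : ℝ} (hb : 0 ≤ b) (hba : b < a)
    (hF : DifferentiableOn ℂ F (strip a)) (hper : ∀ z ∈ strip a, F (z + T) = F z)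
    (hM : ∀ z ∈ strip a, ‖F z‖ ≤ M) {g : AddCircle T → ℂ} (hg : ∀ x : ℝ, g x = F x) (k : ℤ) :
    ‖fourierCoeff g k‖ ≤ M * Real.exp (-(2 * π * b / T)) ^ k.natAbs := by
  obtain ⟨c, hca, hkc⟩ := exists_abs_lt_mul_eq_neg_natAbs hb hba k
  have hT0 : (T : ℂ) ≠ 0 := ofReal_ne_zero.mpr hT.out.ne'
  set G : ℂ → ℂ := fun z => exp (-(2 * π * k * z * I / T)) * F z
  have hGdiff : DifferentiableOn ℂ G (strip a) :=
    (by fun_prop : Differentiable ℂ _).differentiableOn.mul hF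
  have hGper : ∀ z ∈ strip a, G (z + T) = G z := fun z hz => by
    have : -(2 * π * k * (z + T) * I / T) = -(2 * π * k * z * I / T) + (-k : ℤ) * (2 * π * I) := by
      push_cast; field_simp; ring
    simp only [G, hper z hz, this, Complex.exp_add, exp_int_mul_two_pi_mul_I, mul_one]
  have hGbound : ∀ x : ℝ, ‖G (x + c * I)‖ ≤ M * Real.exp (-(2 * π * b / T)) ^ k.natAbs := by
    intro x
    have hexp : ‖exp (-(2 * π * k * (x + c * I) * I / T))‖ =
        Real.exp (-(2 * π * b / T)) ^ k.natAbs := by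
      rw [norm_exp, ← Real.exp_nat_mul]
      congr 1
      have : -(2 * π * k * (x + c * I) * I / T) =
          (2 * π * (k * c) / T : ℝ) + (-(2 * π * k * x / T) : ℝ) * I := by
        push_cast; ring_nf; rw [I_sq]; ring
      rw [this, add_re, ofReal_re, mul_I_re, ofReal_im, neg_zero, add_zero, hkc]
      ring
    rw [norm_mul, hexp, mul_comm M]
    exact mul_le_mul_of_nonneg_left (hM _ (strip.add_mul_I_mem hca x)) (by positivity)
  rw [fourierCoeff_eq_integral_exp hg, ← integral_add_mul_I_eq_of_periodic hGdiff hGper hca,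
    norm_smul, Real.norm_eq_abs, abs_of_pos (by have := hT.out; positivity)]
  calc 1 / T * ‖∫ x in (0 : ℝ)..T, G (x + c * I)‖
      ≤ 1 / T * (M * Real.exp (-(2 * π * b / T)) ^ k.natAbs * |T - 0|) := by
        gcongr
        · have := hT.out; positivity
        exact norm_integral_le_of_norm_le_const fun x _ => hGbound x
    _ = M * Real.exp (-(2 * π * b / T)) ^ k.natAbs := by
        rw [sub_zero, abs_of_pos hT.out]
        field_simp [hT.out.ne']

theorem sum_fourier_equispaced (k : ℤ) {n : ℕ} (hn : n ≠ 0) :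
    ∑ i ∈ Finset.range n, fourier k ((T * i / n : ℝ) : AddCircle T) =
      if (n : ℤ) ∣ k then (n : ℂ) else 0 := by
  set ω := exp (2 * π * I / n)
  have hω : IsPrimitiveRoot ω n := isPrimitiveRoot_exp n hn
  have hterm : ∀ i : ℕ, fourier k ((T * i / n : ℝ) : AddCircle T) = (ω ^ k) ^ i := fun i => by
    have hT0 : (T : ℂ) ≠ 0 := ofReal_ne_zero.mpr hT.out.ne'
    rw [fourier_coe_apply, ← exp_int_mul, ← Complex.exp_nat_mul]
    congr 1
    push_cast
    field_simp
  simp_rw [hterm]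
  split_ifs with hdvd
  · simp [(hω.zpow_eq_one_iff_dvd k).mpr hdvd]
  · have h1 : ω ^ k ≠ 1 := mt (hω.zpow_eq_one_iff_dvd k).mp hdvd
    rw [geom_sum_eq h1, ← zpow_natCast, ← zpow_mul, mul_comm, zpow_mul, zpow_natCast,
      hω.pow_eq_one, one_zpow, sub_self, zero_div]

theorem hasSum_fourierCoeff_mul_natCast (g : C(AddCircle T, ℂ))
    (hg : Summable (fourierCoeff g)) {n : ℕ} (hn : n ≠ 0) :
    HasSum (fun m : ℤ => fourierCoeff g (m * n))
      ((∑ i ∈ Finset.range n, g (T * i / n : ℝ)) / n) := by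
  have hnodes : HasSum (fun k => fourierCoeff g k * if (n : ℤ) ∣ k then (n : ℂ) else 0)
      (∑ i ∈ Finset.range n, g (T * i / n : ℝ)) := by
    have := hasSum_sum fun i (_ : i ∈ Finset.range n) =>
      has_pointwise_sum_fourier_series_of_summable hg ((T * i / n : ℝ) : AddCircle T)
    simpa only [smul_eq_mul, ← Finset.mul_sum, sum_fourier_equispaced _ hn] using this
  have hinj : Function.Injective (· * (n : ℤ)) := mul_left_injective₀ (by exact_mod_cast hn)
  have hmult := ((hinj.hasSum_iff fun k hk => ?_).mpr hnodes).div_const (n : ℂ)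
  · refine hmult.congr_fun fun m => ?_
    simp [mul_div_cancel_right₀ _ (Nat.cast_ne_zero.mpr hn : (n : ℂ) ≠ 0)]
  · rw [if_neg fun ⟨m, hm⟩ => hk ⟨m, by simp [hm, mul_comm]⟩, mul_zero]

theorem integral_eq_mul_fourierCoeff_zero (g : AddCircle T → ℂ) :
    ∫ x in (0 : ℝ)..T, g x = T * fourierCoeff g 0 := by
  rw [fourierCoeff_eq_intervalIntegral g 0 0, zero_add]
  simp [hT.out.ne']

theorem norm_trapezoid_sub_integral_le (g : C(AddCircle T, ℂ)) {M q : ℝ} (hq0 : 0 ≤ q)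
    (hq1 : q < 1) (hg : ∀ k, ‖fourierCoeff g k‖ ≤ M * q ^ k.natAbs) {n : ℕ} (hn : n ≠ 0) :
    ‖T / n * ∑ i ∈ Finset.range n, g (T * i / n : ℝ) - ∫ x in (0 : ℝ)..T, g x‖ ≤
      2 * T * M / (1 - q) * q ^ n := by
  have hM : 0 ≤ M := by simpa using (norm_nonneg _).trans (hg 0)
  have hr0 : 0 ≤ q ^ n := pow_nonneg hq0 n
  have hrq : q ^ n ≤ q := pow_le_of_le_one hq0 hq1.le hn
  have hsum : Summable (fourierCoeff g) :=
    .of_norm_bounded ((summable_pow_natAbs hq0 hq1).mul_left M) hg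
  have herr : HasSum
      (fun m : ℤ => T * (fourierCoeff g (m * n) - if m = 0 then fourierCoeff g 0 else 0))
      (T / n * ∑ i ∈ Finset.range n, g (T * i / n : ℝ) - ∫ x in (0 : ℝ)..T, g x) := by
    rw [integral_eq_mul_fourierCoeff_zero]
    convert ((hasSum_fourierCoeff_mul_natCast g hsum hn).sub
      (hasSum_ite_eq 0 (fourierCoeff g 0))).mul_left (T : ℂ) using 1 <;> first | rfl | ring
  have hterm : ∀ m : ℤ, ‖T * (fourierCoeff g (m * n) - if m = 0 then fourierCoeff g 0 else 0)‖ ≤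
      T * M * (if m = 0 then 0 else (q ^ n) ^ m.natAbs) := fun m => by
    split_ifs with hm
    · simp [hm]
    · rw [sub_zero, norm_mul, norm_real, Real.norm_of_nonneg hT.out.le, mul_assoc, ← pow_mul,
        mul_comm n, ← Int.natAbs_natCast n, ← Int.natAbs_mul]
      exact mul_le_mul_of_nonneg_left (hg _) hT.out.le
  calc _ ≤ T * M * (2 * q ^ n / (1 - q ^ n)) :=
        herr.norm_le_of_bounded ((hasSum_ite_pow_natAbs hr0 (hrq.trans_lt hq1)).mul_left _) hterm
    _ = 2 * T * M * q ^ n / (1 - q ^ n) := by ring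
    _ ≤ 2 * T * M * q ^ n / (1 - q) := by
        have := hT.out
        gcongr
    _ = 2 * T * M / (1 - q) * q ^ n := by ring

end Fourier

theorem norm_trapezoid_sub_integral_le_of_strip {T : ℝ} (hT : 0 < T) {F : ℂ → ℂ} {a b M : ℝ}
    (hb : 0 < b) (hba : b < a) (hF : DifferentiableOn ℂ F (strip a))
    (hper : ∀ x : ℝ, F (x + T) = F x) (hM : ∀ z ∈ strip a, ‖F z‖ ≤ M) {n : ℕ} (hn : n ≠ 0) :
    ‖T / n * ∑ i ∈ Finset.range n, F ↑(T * i / n) - ∫ x in (0 : ℝ)..T, F x‖ ≤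
      2 * T * M / (1 - Real.exp (-(2 * π * b / T))) * Real.exp (-(2 * π * b / T)) ^ n := by
  have : Fact (0 < T) := ⟨hT⟩
  have hperR : Function.Periodic (fun x : ℝ => F x) T := fun x => by simpa using hper x
  have hcont : Continuous fun x : ℝ => F x :=
    hF.continuousOn.comp_continuous continuous_ofReal (strip.ofReal_mem (hb.trans hba))
  let g : C(AddCircle T, ℂ) := ⟨hperR.lift, hcont.quotient_liftOn' _⟩
  have hg : ∀ x : ℝ, g x = F x := hperR.lift_coe
  have hcoeff := norm_fourierCoeff_le_of_strip hb.le hba hF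
    (periodic_on_strip_of_periodic_ofReal (hb.trans hba) hF hper) hM hg
  have hq1 : Real.exp (-(2 * π * b / T)) < 1 := by
    rw [exp_lt_one_iff, neg_lt_zero]
    positivity
  simpa only [hg] using norm_trapezoid_sub_integral_le g (exp_pos _).le hq1 hcoeff hn

/-- Exponential convergence of the trapezoidal rule for a `2π`-periodic
real-analytic function: if `f` extends to a bounded holomorphic function on a
strip `{|Im z| < a}`, then there exist `C > 0`, `q ∈ (0,1)` with
`|T⁽ⁿ⁾(f) − ∫₀^{2π} f| ≤ C qⁿ` for all `n ≥ 1`, where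
`T⁽ⁿ⁾(f) = (2π/n) ∑_{i<n} f(2πi/n)`. -/
theorem trapezoidal_exponential_convergence
    (f : ℝ → ℝ) (hper : Function.Periodic f (2 * π))
    (F : ℂ → ℂ) (a : ℝ) (ha : 0 < a)
    (hF : DifferentiableOn ℂ F {z : ℂ | |z.im| < a})
    (hbd : ∃ M : ℝ, ∀ z ∈ {z : ℂ | |z.im| < a}, ‖F z‖ ≤ M)
    (hext : ∀ x : ℝ, F x = (f x : ℂ)) :
    ∃ C > 0, ∃ q ∈ Set.Ioo (0 : ℝ) 1, ∀ n : ℕ, 1 ≤ n →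
      |(2 * π / n) * (∑ i ∈ Finset.range n, f (2 * π * i / n)) -
        ∫ φ in (0:ℝ)..(2 * π), f φ| ≤ C * q ^ n := by
  obtain ⟨M, hM⟩ := hbd
  set q := Real.exp (-(a / 2))
  have hq : q ∈ Set.Ioo (0 : ℝ) 1 := ⟨exp_pos _, exp_lt_one_iff.mpr (by linarith)⟩
  set C := 2 * (2 * π) * M / (1 - q)
  refine ⟨max C 1, lt_max_of_lt_right one_pos, q, hq, fun n hn => ?_⟩
  have herr := norm_trapezoid_sub_integral_le_of_strip two_pi_pos (half_pos ha)
    (half_lt_self ha) hF (fun x => by rw [← ofReal_add, hext, hext, hper]) hM (n := n) (by omega)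
  rw [show 2 * π * (a / 2) / (2 * π) = a / 2 by field_simp] at herr
  calc _ = ‖(↑(2 * π) / n * ∑ i ∈ Finset.range n, F ↑(2 * π * i / n) -
        ∫ x in (0 : ℝ)..2 * π, F ↑x)‖ := by
        rw [← Real.norm_eq_abs, ← norm_real]
        simp only [hext]
        push_cast [integral_ofReal]
        rfl
    _ ≤ C * q ^ n := herr
    _ ≤ max C 1 * q ^ n := mul_le_mul_of_nonneg_right (le_max_left _ _) (pow_nonneg hq.1.le n)
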